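/- Let Φ be a reduced root system with base Π, J ⊆ Π, π the projection modulo ⟨Π∖J⟩, and Φ_J = π(Φ)∖{0} the relative roots. Let α ∈ Φ_J and let β = π(b) for some b ∈ J be a simple relative root linearly independent from α. Then the set {i ∈ Z : α + iβ ∈ Φ_J} is an interval of integers: there exist m, n ≥ 0 such that (α + Zβ) ∩ Φ_J = {α + iβ : −m ≤ i ≤ n}. -/

import Mathlib

open scoped RealInnerProductSpace

/-- A reduced root system `Φ` with a fixed base (system of simple roots) `base`
in a real inner product space. -/
structure RootSystemData (V : Type) [NormedAddCommGroup V] [InnerProductSpace ℝ V] where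
  Φ : Set V
  base : Finset V
  finite : Φ.Finite
  zero_notMem : (0:V) ∉ Φ
  neg_mem : ∀ a ∈ Φ, -a ∈ Φ
  reduced : ∀ a ∈ Φ, ∀ t : ℝ, t • a ∈ Φ → t = 1 ∨ t = -1
  reflect_mem : ∀ a ∈ Φ, ∀ b ∈ Φ, b - (2 * (inner ℝ a b : ℝ) / (inner ℝ a a : ℝ)) • a ∈ Φ
  cartan_int : ∀ a ∈ Φ, ∀ b ∈ Φ, ∃ n : ℤ, 2 * (inner ℝ a b : ℝ) / (inner ℝ a a : ℝ) = (n : ℝ)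
  base_sub : ↑base ⊆ Φ
  base_indep : LinearIndependent ℝ (fun b : base => (b : V))
  base_gen : ∀ a ∈ Φ,
    (∃ c : V → ℕ, a = ∑ b ∈ base, c b • b) ∨ (∃ c : V → ℕ, -a = ∑ b ∈ base, c b • b)

namespace RootSystemData

variable {V : Type} [NormedAddCommGroup V] [InnerProductSpace ℝ V] (RS : RootSystemData V)

/-- `a` is a nonnegative integral combination of the simple roots. -/
def IsPos (a : V) : Prop := ∃ c : V → ℕ, a = ∑ b ∈ RS.base, c b • b

/-- The quotient space `V / ⟨Π ∖ J⟩`, ambient space of the relative roots. -/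
abbrev Qspace (J : Finset V) : Type :=
  V ⧸ Submodule.span ℝ ((RS.base : Set V) \ (J : Set V))

/-- The canonical projection `π : V → V / ⟨Π ∖ J⟩`. -/
def proj (J : Finset V) : V →ₗ[ℝ] RS.Qspace J :=
  Submodule.mkQ _

/-- The set of relative roots `Φ_J = π(Φ) ∖ {0}`. -/
def relRoots (J : Finset V) : Set (RS.Qspace J) := (RS.proj J '' RS.Φ) \ {0}

/-- `β` is a simple relative root: a nonzero image of a simple root in `J`. -/
def IsSimpleRel (J : Finset V) (β : RS.Qspace J) : Prop :=
  β ≠ 0 ∧ ∃ b ∈ J, β = RS.proj J b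

/-- `β` is a positive relative root: a relative root that is a nonnegative
integral combination of the simple relative roots. -/
def IsPosRel (J : Finset V) (β : RS.Qspace J) : Prop :=
  β ∈ RS.relRoots J ∧ ∃ c : V → ℕ, β = ∑ b ∈ J, c b • RS.proj J b

/-- `a` is maximal in `S` with respect to the base `Π`. -/
def IsMaximalIn (S : Set V) (a : V) : Prop := a ∈ S ∧ ∀ b ∈ RS.base, a + b ∉ S

/-- `a` is minimal in `S` with respect to the base `Π`. -/
def IsMinimalIn (S : Set V) (a : V) : Prop := a ∈ S ∧ ∀ b ∈ RS.base, a - b ∉ S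

/-- `a` is the highest root: every root is obtained from it by subtracting a
nonnegative combination of simple roots. -/
def IsHighest (a : V) : Prop :=
  a ∈ RS.Φ ∧ ∀ b ∈ RS.Φ, ∃ c : V → ℕ, a - b = ∑ x ∈ RS.base, c x • x

/-- `S` is an irreducible component of `Φ`: a nonempty subset orthogonal to its
complement admitting no further nontrivial orthogonal splitting. -/
def IsComponent (S : Set V) : Prop :=
  S ⊆ RS.Φ ∧ S.Nonempty ∧ (∀ a ∈ S, ∀ b ∈ RS.Φ \ S, (inner ℝ a b : ℝ) = 0) ∧
    ∀ T ⊆ S, T.Nonempty → (∀ a ∈ T, ∀ b ∈ RS.Φ \ T, (inner ℝ a b : ℝ) = 0) → T = S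

/-- The root system is irreducible. -/
def Irred : Prop := RS.IsComponent RS.Φ

end RootSystemData

/-!
Let `K = ⟨Π ∖ J⟩ = ker π`, pick `b ∈ J` with `π b = β`, and write `b = k + w` with `k ∈ K` and
`w ∈ Kᗮ`. The reflections in the simple roots of `Π ∖ J` permute the finitely many roots lying
over a relative root `x`, so their sum is orthogonal to `K`; hence the mean of `⟪d, b⟫` over the
roots `d` above `x = π a` is `⟪a, w⟫`. Along `x = α + iβ` this is affine in `i` with slope
`⟪b, w⟫ = ‖w‖² > 0`. If `α + (i + 1)β` is not a relative root, every root `d` above `α + iβ` has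
`⟪d, b⟫ ≥ 0` (otherwise `d + b` would be a root), so the mean is `≥ 0` at `i`; likewise it is
`≤ 0` at `j` if `α + (j - 1)β` is not a relative root. Hence `j ≤ i` for any two such ends, and
the integers `i` with `α + iβ ∈ Φ_J` form an interval.
-/

section Reflection

variable {V : Type*} [NormedAddCommGroup V] [InnerProductSpace ℝ V]

noncomputable def rootReflection (c x : V) : V := x - (2 * ⟪c, x⟫ / ⟪c, c⟫) • c

lemma inner_rootReflection (c x : V) (hc : c ≠ 0) : ⟪c, rootReflection c x⟫ = -⟪c, x⟫ := by
  have : ⟪c, c⟫ ≠ 0 := inner_self_ne_zero.2 hc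
  rw [rootReflection, inner_sub_right, real_inner_smul_right]
  field_simp
  ring

lemma rootReflection_rootReflection (c x : V) (hc : c ≠ 0) :
    rootReflection c (rootReflection c x) = x := by
  rw [rootReflection, inner_rootReflection c x hc, rootReflection]
  simp only [mul_neg, neg_div, neg_smul, sub_neg_eq_add, sub_add_cancel]

lemma inner_sum_eq_zero_of_mapsTo_rootReflection {c : V} (hc : c ≠ 0) {X : Finset V}
    (hX : ∀ x ∈ X, rootReflection c x ∈ X) : ⟪c, ∑ x ∈ X, x⟫ = 0 := by
  have hsum : ∑ x ∈ X, rootReflection c x = ∑ x ∈ X, x :=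
    Finset.sum_nbij' (rootReflection c) (rootReflection c) hX hX
      (fun x _ => rootReflection_rootReflection c x hc)
      (fun x _ => rootReflection_rootReflection c x hc) (fun _ _ => rfl)
  have h : ∑ x ∈ X, rootReflection c x = ∑ x ∈ X, x - (2 * ⟪c, ∑ x ∈ X, x⟫ / ⟪c, c⟫) • c := by
    simp only [rootReflection, Finset.sum_sub_distrib, ← Finset.sum_smul, inner_sum,
      Finset.mul_sum, Finset.sum_div]
  rw [hsum, eq_comm, sub_eq_self, smul_eq_zero] at h
  simpa [hc, inner_self_ne_zero.2 hc] using h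

end Reflection

section Integers

lemma Set.Finite.setOf_add_zsmul_mem {M : Type*} [AddGroup M] {s : Set M} (hs : s.Finite)
    (x y : M) (hy : ∀ k : ℤ, k • y = 0 → k = 0) : {i : ℤ | x + i • y ∈ s}.Finite :=
  hs.preimage fun i _ j _ hij => by
    have := hy (i - j) (by rw [sub_zsmul, add_neg_eq_zero]; exact add_left_cancel hij)
    omega

lemma Int.ordConnected_of_add_one_mem_or_sub_one_mem {S : Set ℤ}
    (h : ∀ i ∈ S, ∀ j ∈ S, i < j → i + 1 ∈ S ∨ j - 1 ∈ S) : S.OrdConnected := by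
  refine ⟨fun i hi j hj k hk => by_contra fun hkS => ?_⟩
  have hik : i < k := lt_of_le_of_ne hk.1 (by rintro rfl; exact hkS hi)
  have hkj : k < j := lt_of_le_of_ne hk.2 (by rintro rfl; exact hkS hj)
  obtain ⟨i', ⟨hi'S, hi'k⟩, hi'max⟩ := Int.exists_greatest_of_bdd (P := fun z => z ∈ S ∧ z < k)
    ⟨k, fun z hz => hz.2.le⟩ ⟨i, hi, hik⟩
  obtain ⟨j', ⟨hj'S, hkj'⟩, hj'min⟩ := Int.exists_least_of_bdd (P := fun z => z ∈ S ∧ k < z)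
    ⟨k, fun z hz => hz.2.le⟩ ⟨j, hj, hkj⟩
  rcases h i' hi'S j' hj'S (hi'k.trans hkj') with hS | hS
  · rcases lt_or_eq_of_le (Int.add_one_le_of_lt hi'k) with hlt | rfl
    · exact absurd (hi'max _ ⟨hS, hlt⟩) (by omega)
    · exact hkS hS
  · rcases lt_or_eq_of_le (Int.le_sub_one_of_lt hkj') with hlt | heq
    · exact absurd (hj'min _ ⟨hS, hlt⟩) (by omega)
    · exact hkS (heq ▸ hS)

lemma Int.exists_Icc_of_ordConnected {S : Set ℤ} (hS : S.Finite) (h0 : 0 ∈ S)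
    (hc : S.OrdConnected) : ∃ m n : ℕ, ∀ i : ℤ, i ∈ S ↔ -(m : ℤ) ≤ i ∧ i ≤ n := by
  have hlo : sInf S ≤ 0 := csInf_le hS.bddBelow h0
  have hhi : 0 ≤ sSup S := le_csSup hS.bddAbove h0
  refine ⟨(-sInf S).toNat, (sSup S).toNat, fun i => ⟨fun hi => ?_, fun hi => ?_⟩⟩
  · have := csInf_le hS.bddBelow hi
    have := le_csSup hS.bddAbove hi
    omega
  · exact hc.out (Int.csInf_mem ⟨0, h0⟩ hS.bddBelow) (Int.csSup_mem ⟨0, h0⟩ hS.bddAbove)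
      ⟨by omega, by omega⟩

end Integers

namespace RootSystemData

variable {V : Type} [NormedAddCommGroup V] [InnerProductSpace ℝ V] (RS : RootSystemData V)

lemma ne_zero_of_mem {a : V} (ha : a ∈ RS.Φ) : a ≠ 0 :=
  fun h => RS.zero_notMem (h ▸ ha)

lemma inner_mul_inner_lt_of_inner_pos {a b : V} (ha : a ∈ RS.Φ) (hb : b ∈ RS.Φ) (hab : 0 < ⟪a, b⟫)
    (hne : a ≠ b) : ⟪a, b⟫ * ⟪a, b⟫ < ⟪a, a⟫ * ⟪b, b⟫ := by
  refine lt_of_le_of_ne (real_inner_mul_inner_self_le a b) fun heq => hne ?_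
  have hnorm : ⟪a, b⟫ = ‖a‖ * ‖b‖ := by
    rw [real_inner_self_eq_norm_mul_norm, real_inner_self_eq_norm_mul_norm] at heq
    nlinarith [norm_nonneg a, norm_nonneg b, mul_nonneg (norm_nonneg a) (norm_nonneg b)]
  obtain ⟨-, r, hr, rfl⟩ := (real_inner_div_norm_mul_norm_eq_one_iff a b).1 (by
    rw [hnorm, div_self (hnorm ▸ hab.ne')])
  rcases RS.reduced a ha r hb with rfl | rfl
  · rw [one_smul]
  · norm_num at hr

/-- The Cartan integers `2⟪a, b⟫/⟪a, a⟫` and `2⟪a, b⟫/⟪b, b⟫` are positive with product `< 4`,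
so one of them is `1`. -/
lemma sub_mem_of_inner_pos {a b : V} (ha : a ∈ RS.Φ) (hb : b ∈ RS.Φ) (hab : 0 < ⟪a, b⟫)
    (hne : a ≠ b) : a - b ∈ RS.Φ := by
  have hsa : 0 < ⟪a, a⟫ := real_inner_self_pos.2 (RS.ne_zero_of_mem ha)
  have hsb : 0 < ⟪b, b⟫ := real_inner_self_pos.2 (RS.ne_zero_of_mem hb)
  obtain ⟨na, hna⟩ := RS.cartan_int a ha b hb
  obtain ⟨nb, hnb⟩ := RS.cartan_int b hb a ha
  have hna0 : 0 < na := by exact_mod_cast (show (0 : ℝ) < na by rw [← hna]; positivity)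
  have hnb0 : 0 < nb := by
    exact_mod_cast (show (0 : ℝ) < nb by rw [← hnb, real_inner_comm]; positivity)
  have hprod : na * nb < 4 := by
    have h := RS.inner_mul_inner_lt_of_inner_pos ha hb hab hne
    have : (na : ℝ) * nb < 4 := by
      rw [← hna, ← hnb, real_inner_comm a b, div_mul_div_comm, div_lt_iff₀ (by positivity)]
      nlinarith
    exact_mod_cast this
  have hcases : na = 1 ∨ nb = 1 := by
    by_contra! h
    nlinarith [(by omega : 2 ≤ na), (by omega : 2 ≤ nb)]
  rcases hcases with h | h
  · have hr := RS.reflect_mem a ha b hb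
    rw [hna, h, Int.cast_one, one_smul] at hr
    simpa using RS.neg_mem _ hr
  · have hr := RS.reflect_mem b hb a ha
    rwa [hnb, h, Int.cast_one, one_smul] at hr

lemma add_mem_of_inner_neg {a b : V} (ha : a ∈ RS.Φ) (hb : b ∈ RS.Φ) (hab : ⟪a, b⟫ < 0)
    (hne : a ≠ -b) : a + b ∈ RS.Φ := by
  simpa using RS.sub_mem_of_inner_pos ha (RS.neg_mem b hb) (by rwa [inner_neg_right, neg_pos])
    hne


variable (J : Finset V)

lemma ker_proj : LinearMap.ker (RS.proj J) = Submodule.span ℝ ((RS.base : Set V) \ (J : Set V)) :=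
  Submodule.ker_mkQ _

lemma proj_eq_zero {c : V} (hc : c ∈ RS.base) (hcJ : c ∉ J) : RS.proj J c = 0 := by
  rw [← LinearMap.mem_ker, ker_proj]
  exact Submodule.subset_span ⟨hc, hcJ⟩

lemma proj_surjective : Function.Surjective (RS.proj J) :=
  Submodule.mkQ_surjective _

lemma finite_relRoots : (RS.relRoots J).Finite :=
  (RS.finite.image _).subset Set.sdiff_subset

lemma neg_mem_relRoots {x : RS.Qspace J} (hx : x ∈ RS.relRoots J) : -x ∈ RS.relRoots J := by
  obtain ⟨⟨d, hd, rfl⟩, hx0⟩ := hx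
  exact ⟨⟨-d, RS.neg_mem d hd, map_neg _ d⟩, neg_ne_zero.2 hx0⟩

open Classical in
noncomputable def fiber (x : RS.Qspace J) : Finset V :=
  {d ∈ RS.finite.toFinset | RS.proj J d = x}

variable {RS J}

lemma mem_fiber {x : RS.Qspace J} {d : V} : d ∈ RS.fiber J x ↔ d ∈ RS.Φ ∧ RS.proj J d = x := by
  simp [fiber]

lemma fiber_nonempty {x : RS.Qspace J} (hx : x ∈ RS.relRoots J) : (RS.fiber J x).Nonempty := by
  obtain ⟨⟨d, hd, rfl⟩, -⟩ := hx
  exact ⟨d, mem_fiber.2 ⟨hd, rfl⟩⟩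

lemma rootReflection_mem_fiber {c : V} (hc : c ∈ RS.base) (hcJ : c ∉ J) {x : RS.Qspace J}
    {d : V} (hd : d ∈ RS.fiber J x) : rootReflection c d ∈ RS.fiber J x := by
  obtain ⟨hdΦ, rfl⟩ := mem_fiber.1 hd
  refine mem_fiber.2 ⟨RS.reflect_mem c (RS.base_sub hc) d hdΦ, ?_⟩
  rw [rootReflection, map_sub, map_smul, RS.proj_eq_zero J hc hcJ, smul_zero, sub_zero]

lemma sum_fiber_mem_orthogonal (x : RS.Qspace J) :
    ∑ d ∈ RS.fiber J x, d ∈ (LinearMap.ker (RS.proj J))ᗮ := by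
  refine (Submodule.mem_orthogonal' _ _).2 fun u hu => ?_
  rw [ker_proj] at hu
  refine Submodule.mem_orthogonal_singleton_iff_inner_right.1 (Submodule.span_le.2 ?_ hu)
  rintro c ⟨hc, hcJ⟩
  rw [SetLike.mem_coe, Submodule.mem_orthogonal_singleton_iff_inner_right, real_inner_comm]
  exact inner_sum_eq_zero_of_mapsTo_rootReflection (RS.ne_zero_of_mem (RS.base_sub hc))
    fun d hd => rootReflection_mem_fiber hc hcJ hd

lemma sum_inner_fiber {b w : V} (hw : w ∈ (LinearMap.ker (RS.proj J))ᗮ)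
    (hbw : b - w ∈ LinearMap.ker (RS.proj J)) (a : V) :
    ∑ d ∈ RS.fiber J (RS.proj J a), ⟪d, b⟫ = (RS.fiber J (RS.proj J a)).card * ⟪a, w⟫ := by
  have hsplit : ∀ d ∈ RS.fiber J (RS.proj J a), ⟪d, b⟫ = ⟪a, w⟫ + ⟪d, b - w⟫ := by
    intro d hd
    have hda : d - a ∈ LinearMap.ker (RS.proj J) := by
      rw [LinearMap.mem_ker, map_sub, (mem_fiber.1 hd).2, sub_self]
    have h := Submodule.inner_right_of_mem_orthogonal hda hw
    rw [inner_sub_left] at h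
    rw [inner_sub_right]
    linarith
  rw [Finset.sum_congr rfl hsplit, Finset.sum_add_distrib, Finset.sum_const, nsmul_eq_mul,
    ← sum_inner, Submodule.inner_left_of_mem_orthogonal hbw (sum_fiber_mem_orthogonal _), add_zero]

lemma inner_nonneg_of_add_notMem_relRoots {a b w : V} (hb : b ∈ RS.Φ)
    (hw : w ∈ (LinearMap.ker (RS.proj J))ᗮ) (hbw : b - w ∈ LinearMap.ker (RS.proj J))
    (ha : RS.proj J a ∈ RS.relRoots J) (hadd : RS.proj J a + RS.proj J b ∉ RS.relRoots J)
    (hne : RS.proj J a + RS.proj J b ≠ 0) : 0 ≤ ⟪a, w⟫ := by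
  have hterm : ∀ d ∈ RS.fiber J (RS.proj J a), 0 ≤ ⟪d, b⟫ := by
    intro d hd
    obtain ⟨hdΦ, hdx⟩ := mem_fiber.1 hd
    by_contra! hneg
    have hdb : d ≠ -b := by
      rintro rfl
      exact hne (by rw [← hdx, map_neg, neg_add_cancel])
    exact hadd ⟨⟨d + b, RS.add_mem_of_inner_neg hdΦ hb hneg hdb, by rw [map_add, hdx]⟩, hne⟩
  have hsum := Finset.sum_nonneg hterm
  rw [sum_inner_fiber hw hbw] at hsum
  exact nonneg_of_mul_nonneg_right hsum (by exact_mod_cast (fiber_nonempty ha).card_pos)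

lemma inner_nonpos_of_sub_notMem_relRoots {a b w : V} (hb : b ∈ RS.Φ)
    (hw : w ∈ (LinearMap.ker (RS.proj J))ᗮ) (hbw : b - w ∈ LinearMap.ker (RS.proj J))
    (ha : RS.proj J a ∈ RS.relRoots J) (hsub : RS.proj J a - RS.proj J b ∉ RS.relRoots J)
    (hne : RS.proj J a - RS.proj J b ≠ 0) : ⟪a, w⟫ ≤ 0 := by
  have hneg : -RS.proj J a + RS.proj J b = -(RS.proj J a - RS.proj J b) := by abel
  have h := inner_nonneg_of_add_notMem_relRoots (a := -a) hb hw hbw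
    (by rw [map_neg]; exact RS.neg_mem_relRoots J ha)
    (by rw [map_neg, hneg]; exact fun h => hsub (by simpa using RS.neg_mem_relRoots J h))
    (by rwa [map_neg, hneg, neg_ne_zero])
  rwa [inner_neg_left, neg_nonneg] at h

lemma exists_inner_pos_of_proj_ne_zero {b : V} (hb : RS.proj J b ≠ 0) :
    ∃ w ∈ (LinearMap.ker (RS.proj J))ᗮ, b - w ∈ LinearMap.ker (RS.proj J) ∧ 0 < ⟪b, w⟫ := by
  have : FiniteDimensional ℝ (LinearMap.ker (RS.proj J)) := by
    rw [ker_proj]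
    exact FiniteDimensional.span_of_finite ℝ RS.base.finite_toSet.sdiff
  obtain ⟨k, hk, w, hw, rfl⟩ := (LinearMap.ker (RS.proj J)).exists_add_mem_mem_orthogonal b
  have hw0 : w ≠ 0 := by
    rintro rfl
    exact hb (by simpa using hk)
  refine ⟨w, hw, by simpa using hk, ?_⟩
  rw [inner_add_left, Submodule.inner_right_of_mem_orthogonal hk hw, zero_add]
  exact real_inner_self_pos.2 hw0

lemma add_one_zsmul_mem_or_sub_one_zsmul_mem_relRoots {α : RS.Qspace J} {b : V}
    (hb : b ∈ RS.Φ) (hβ0 : RS.proj J b ≠ 0) (hne : ∀ i : ℤ, α + i • RS.proj J b ≠ 0) {i j : ℤ}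
    (hij : i < j) (hi : α + i • RS.proj J b ∈ RS.relRoots J)
    (hj : α + j • RS.proj J b ∈ RS.relRoots J) :
    α + (i + 1) • RS.proj J b ∈ RS.relRoots J ∨ α + (j - 1) • RS.proj J b ∈ RS.relRoots J := by
  obtain ⟨a, rfl⟩ := proj_surjective RS J α
  obtain ⟨w, hw, hbw, hbw_pos⟩ := exists_inner_pos_of_proj_ne_zero hβ0
  have hlift : ∀ k : ℤ, RS.proj J (a + k • b) = RS.proj J a + k • RS.proj J b := fun k => by
    rw [map_add, map_zsmul]
  have hinner : ∀ k : ℤ, ⟪a + k • b, w⟫ = ⟪a, w⟫ + k * ⟪b, w⟫ := fun k => by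
    rw [inner_add_left, ← Int.cast_smul_eq_zsmul ℝ, real_inner_smul_left]
  by_contra! ⟨hi1, hj1⟩
  have hi' := inner_nonneg_of_add_notMem_relRoots (a := a + i • b) hb hw hbw
    (by rwa [hlift]) (by rwa [hlift, add_assoc, ← add_one_zsmul])
    (by rw [hlift, add_assoc, ← add_one_zsmul]; exact hne _)
  have hj' := inner_nonpos_of_sub_notMem_relRoots (a := a + j • b) hb hw hbw
    (by rwa [hlift]) (by rwa [hlift, sub_eq_add_neg, add_assoc, ← sub_one_zsmul])
    (by rw [hlift, sub_eq_add_neg, add_assoc, ← sub_one_zsmul]; exact hne _)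
  rw [hinner] at hi' hj'
  have : (i : ℝ) < j := by exact_mod_cast hij
  nlinarith

end RootSystemData

open RootSystemData in
theorem stmt3 {V : Type} [NormedAddCommGroup V] [InnerProductSpace ℝ V]
    (RS : RootSystemData V) (J : Finset V) (hJ : J ⊆ RS.base)
    (α : RS.Qspace J) (hα : α ∈ RS.relRoots J)
    (β : RS.Qspace J) (hβ : RS.IsSimpleRel J β)
    (hind : ∀ m k : ℤ, m • α + k • β = 0 → m = 0 ∧ k = 0) :
    ∃ m n : ℕ, ∀ i : ℤ, (α + i • β ∈ RS.relRoots J ↔ -(m : ℤ) ≤ i ∧ i ≤ (n : ℤ)) := by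
  obtain ⟨hβ0, b, hbJ, rfl⟩ := hβ
  have hne : ∀ i : ℤ, α + i • RS.proj J b ≠ 0 := fun i h =>
    one_ne_zero (hind 1 i (by rwa [one_smul])).1
  have htors : ∀ k : ℤ, k • RS.proj J b = 0 → k = 0 := fun k h =>
    (hind 0 k (by rwa [zero_smul, zero_add])).2
  refine Int.exists_Icc_of_ordConnected ((RS.finite_relRoots J).setOf_add_zsmul_mem α _ htors)
    (show α + (0 : ℤ) • RS.proj J b ∈ RS.relRoots J by rwa [zero_smul, add_zero])
    (Int.ordConnected_of_add_one_mem_or_sub_one_mem fun i hi j hj hij => ?_)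
  exact add_one_zsmul_mem_or_sub_one_zsmul_mem_relRoots (RS.base_sub (hJ hbJ)) hβ0 hne hij hi hj
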